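/- For a finite set X, a probability measure μ on X with full support, and real-valued functions g, h on X, the total variation distance between the associated Gibbs distributions satisfies ‖μ_g − μ_h‖_TV ≤ ‖g − h‖_s / 4. -/

import Mathlib

open Finset Real

noncomputable def gibbs {X : Type*} [Fintype X] (μ : X → ℝ) (f : X → ℝ) : X → ℝ :=
  fun x => μ x * Real.exp (f x) / ∑ y, μ y * Real.exp (f y)

/-- Total variation distance between distributions on a finite set. -/
noncomputable def tvDist {X : Type*} [Fintype X] (ν ρ : X → ℝ) : ℝ :=
  (1 / 2) * ∑ x, |ν x - ρ x|

noncomputable def spanSeminorm {X : Type*} [Fintype X] (f : X → ℝ) : ℝ :=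
  (⨆ x, f x) - ⨅ x, f x

/-!
Write `μ_g` as the tilt of `p = μ_h` by `a = exp (g - h)`, which takes values in `[B, A]` with
`B = exp (min (g - h))` and `A = exp (max (g - h))`; with `E = E_p a` this gives
`‖μ_g - μ_h‖_TV = E_p |a - E| / (2 E)`. Since `|· - E|` is convex, the mean absolute deviation
is at most that of the two-point law on `{B, A}` with mean `E`, namely
`2 (A - E) (E - B) / (A - B)`, and `(A - E) (E - B) / E ≤ (√A - √B)²` for every `E > 0`. Hence
`‖μ_g - μ_h‖_TV ≤ (√A - √B) / (√A + √B) = tanh (‖g - h‖_s / 4) ≤ ‖g - h‖_s / 4`.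
-/

/-- `log (1 + a) = 2 artanh (a / (a + 2))`; keep the first term of its power series. -/
lemma exp_sub_one_le_mul_exp_add_one {d : ℝ} (hd : 0 ≤ d) : exp d - 1 ≤ d / 2 * (exp d + 1) := by
  have ha : 0 ≤ exp d - 1 := by linarith [add_one_le_exp d]
  have h := le_hasSum (hasSum_log_one_add ha) 0 fun k _ => by positivity
  rw [add_sub_cancel, log_exp] at h
  norm_num at h
  rw [mul_div_assoc', div_le_iff₀ (by positivity)] at h
  linarith

lemma exp_sub_exp_le_mul_add {m M : ℝ} (h : m ≤ M) :
    exp M - exp m ≤ (M - m) / 2 * (exp M + exp m) := by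
  have key := exp_sub_one_le_mul_exp_add_one (sub_nonneg.2 h)
  have hM : exp M = exp (M - m) * exp m := by rw [← exp_add, sub_add_cancel]
  rw [hM]
  nlinarith [exp_pos m]

lemma sq_sub_mul_sub_sq_le (α β E : ℝ) : (α ^ 2 - E) * (E - β ^ 2) ≤ E * (α - β) ^ 2 := by
  nlinarith [sq_nonneg (E - α * β)]

/-- `|· - b|` is convex, so on `[B, A]` it lies below its chord. -/
lemma mul_abs_sub_le_of_mem_Icc {a b A B : ℝ} (ha : a ∈ Set.Icc B A) (hb : b ∈ Set.Icc B A) :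
    (A - B) * |a - b| ≤ (A - a) * (b - B) + (a - B) * (A - b) := by
  obtain ⟨haB, haA⟩ := ha
  obtain ⟨hbB, hbA⟩ := hb
  rcases le_total a b with hab | hab
  · rw [abs_of_nonpos (sub_nonpos.2 hab)]
    nlinarith [mul_nonneg (sub_nonneg.2 haB) (sub_nonneg.2 hbA)]
  · rw [abs_of_nonneg (sub_nonneg.2 hab)]
    nlinarith [mul_nonneg (sub_nonneg.2 hbB) (sub_nonneg.2 haA)]

section Weighted

variable {X : Type*} [Fintype X] {p a : X → ℝ} {A B : ℝ}

lemma sum_mul_mem_Icc (hp : ∀ x, 0 ≤ p x) (hsum : ∑ x, p x = 1) (ha : ∀ x, a x ∈ Set.Icc B A) :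
    ∑ x, p x * a x ∈ Set.Icc B A := by
  simpa only [smul_eq_mul] using
    (convex_Icc B A).sum_mem (fun x _ => hp x) hsum (fun x _ => ha x)

lemma mul_sum_mul_abs_sub_le (hp : ∀ x, 0 ≤ p x) (hsum : ∑ x, p x = 1)
    (ha : ∀ x, a x ∈ Set.Icc B A) :
    (A - B) * ∑ x, p x * |a x - ∑ y, p y * a y|
      ≤ 2 * (A - ∑ y, p y * a y) * (∑ y, p y * a y - B) := by
  set E := ∑ y, p y * a y with hE
  have hEmem : E ∈ Set.Icc B A := sum_mul_mem_Icc hp hsum ha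
  calc (A - B) * ∑ x, p x * |a x - E| = ∑ x, p x * ((A - B) * |a x - E|) := by
        rw [mul_sum]; exact sum_congr rfl fun x _ => by ring
    _ ≤ ∑ x, p x * ((A - a x) * (E - B) + (a x - B) * (A - E)) :=
        sum_le_sum fun x _ =>
          mul_le_mul_of_nonneg_left (mul_abs_sub_le_of_mem_Icc (ha x) hEmem) (hp x)
    _ = ∑ x, ((A + B - 2 * E) * (p x * a x) + (A * E + B * E - 2 * A * B) * p x) :=
        sum_congr rfl fun x _ => by ring
    _ = 2 * (A - E) * (E - B) := by
        rw [sum_add_distrib, ← mul_sum, ← mul_sum, ← hE, hsum]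
        ring

end Weighted

section Gibbs

variable {X : Type*} [Fintype X]

lemma gibbs_nonneg {μ : X → ℝ} (hμ : ∀ x, 0 ≤ μ x) (f : X → ℝ) (x : X) : 0 ≤ gibbs μ f x := by
  unfold gibbs
  exact div_nonneg (mul_nonneg (hμ x) (exp_pos _).le)
    (sum_nonneg fun y _ => mul_nonneg (hμ y) (exp_pos _).le)

lemma sum_gibbs {μ f : X → ℝ} (hZ : ∑ y, μ y * exp (f y) ≠ 0) : ∑ x, gibbs μ f x = 1 := by
  unfold gibbs
  rw [← sum_div, div_self hZ]

lemma sum_mul_exp_pos {μ : X → ℝ} (hμ : ∀ x, 0 ≤ μ x) (hsum : ∑ x, μ x = 1) (f : X → ℝ) :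
    0 < ∑ x, μ x * exp (f x) := by
  obtain ⟨x, -, hx⟩ := exists_lt_of_sum_lt (by simp [hsum] : ∑ _ : X, (0 : ℝ) < ∑ x, μ x)
  exact sum_pos' (fun y _ => mul_nonneg (hμ y) (exp_pos _).le)
    ⟨x, mem_univ x, mul_pos hx (exp_pos _)⟩

lemma gibbs_gibbs {μ f : X → ℝ} (hZ : ∑ y, μ y * exp (f y) ≠ 0) (s : X → ℝ) :
    gibbs (gibbs μ f) s = gibbs μ (f + s) := by
  funext x
  simp only [gibbs, Pi.add_apply, exp_add, div_mul_eq_mul_div, ← sum_div]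
  field_simp

lemma tvDist_gibbs_self_eq {p s : X → ℝ} (hp : ∀ x, 0 ≤ p x) (hE : 0 < ∑ y, p y * exp (s y)) :
    tvDist (gibbs p s) p = (∑ x, p x * |exp (s x) - ∑ y, p y * exp (s y)|)
      / (2 * ∑ y, p y * exp (s y)) := by
  set E := ∑ y, p y * exp (s y)
  have hterm : ∀ x, |gibbs p s x - p x| = p x * |exp (s x) - E| / E := fun x => by
    rw [gibbs, show p x * exp (s x) / E - p x = p x * (exp (s x) - E) / E by field_simp,
      abs_div, abs_mul, abs_of_nonneg (hp x), abs_of_pos hE]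
  rw [tvDist, sum_congr rfl fun x _ => hterm x, ← sum_div]
  field_simp

lemma tvDist_gibbs_self_le_of_lt {p s : X → ℝ} {m M : ℝ} (hp : ∀ x, 0 ≤ p x)
    (hsum : ∑ x, p x = 1) (hs : ∀ x, s x ∈ Set.Icc m M) (hmM : m < M) :
    tvDist (gibbs p s) p ≤ (M - m) / 4 := by
  set E := ∑ y, p y * exp (s y)
  set α := exp (M / 2)
  set β := exp (m / 2)
  have hsq : ∀ t, exp (t / 2) ^ 2 = exp t := fun t => by rw [sq, ← exp_add, add_halves]
  have ha : ∀ x, exp (s x) ∈ Set.Icc (β ^ 2) (α ^ 2) := fun x => by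
    rw [hsq, hsq]
    exact ⟨exp_le_exp.2 (hs x).1, exp_le_exp.2 (hs x).2⟩
  have hEpos : 0 < E := (by positivity : 0 < β ^ 2).trans_le (sum_mul_mem_Icc hp hsum ha).1
  have hβα : β < α := exp_lt_exp.2 (by linarith)
  have hsqdiff : (α ^ 2 - β ^ 2) * tvDist (gibbs p s) p ≤ (α - β) ^ 2 := by
    rw [tvDist_gibbs_self_eq hp hEpos, mul_div_assoc', div_le_iff₀ (by positivity)]
    nlinarith [mul_sum_mul_abs_sub_le hp hsum ha, sq_sub_mul_sub_sq_le α β E]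
  have htanh : (α + β) * tvDist (gibbs p s) p ≤ α - β := by
    refine le_of_mul_le_mul_left ?_ (sub_pos.2 hβα)
    nlinarith
  have hexp := exp_sub_exp_le_mul_add (by linarith : m / 2 ≤ M / 2)
  refine le_of_mul_le_mul_left ?_ (by positivity : 0 < α + β)
  nlinarith

lemma tvDist_gibbs_self_le {p s : X → ℝ} {m M : ℝ} (hp : ∀ x, 0 ≤ p x)
    (hsum : ∑ x, p x = 1) (hs : ∀ x, s x ∈ Set.Icc m M) :
    tvDist (gibbs p s) p ≤ (M - m) / 4 := by
  obtain ⟨x₀, -⟩ := nonempty_of_sum_ne_zero (hsum ▸ one_ne_zero)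
  -- enlarging `M` by `4 ε` avoids the degenerate case `m = M`
  refine le_of_forall_pos_le_add fun ε hε => ?_
  have hs' : ∀ x, s x ∈ Set.Icc m (M + 4 * ε) := fun x =>
    ⟨(hs x).1, (hs x).2.trans (by linarith)⟩
  have := tvDist_gibbs_self_le_of_lt hp hsum hs' (by linarith [(hs x₀).1, (hs x₀).2])
  linarith

end Gibbs

theorem tvDist_gibbs_le_general {X : Type*} [Fintype X]
    (μ : X → ℝ) (hpos : ∀ x, 0 < μ x) (hsum : ∑ x, μ x = 1) (g h : X → ℝ) :
    tvDist (gibbs μ g) (gibbs μ h) ≤ spanSeminorm (fun x => g x - h x) / 4 := by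
  have hμ : ∀ x, 0 ≤ μ x := fun x => (hpos x).le
  have hZ := (sum_mul_exp_pos hμ hsum h).ne'
  have hg : gibbs μ g = gibbs (gibbs μ h) (fun x => g x - h x) := by
    rw [gibbs_gibbs hZ]
    congr
    funext x
    simp
  rw [hg, spanSeminorm]
  exact tvDist_gibbs_self_le (gibbs_nonneg hμ h) (sum_gibbs hZ) fun x =>
    ⟨ciInf_le (Set.finite_range _).bddBelow x,
      le_ciSup (Set.finite_range fun x => g x - h x).bddAbove x⟩

theorem tvDist_gibbs_le {X : Type*} [Fintype X] [Nonempty X]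
    (μ : X → ℝ) (hpos : ∀ x, 0 < μ x) (hsum : ∑ x, μ x = 1) (g h : X → ℝ) :
    tvDist (gibbs μ g) (gibbs μ h) ≤ spanSeminorm (fun x => g x - h x) / 4 :=
  tvDist_gibbs_le_general μ hpos hsum g h
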